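/- arXiv:1010.2022 — 3 statements merged into one kernel-verified Lean document; each statement's English description precedes it below -/
import Mathlib

section
/- Let n ≥ 1 and let H be a real symmetric positive semidefinite (2n)×(2n) matrix, with rows and columns indexed by the real coordinates x¹,…,xⁿ,y¹,…,yⁿ of ℂⁿ (so H plays the role of the real Hessian D²w of a real C² function w on a domain in ℂⁿ at a point where D²w ≥ 0). Define the complex n×n matrix A (the complex Hessian w_{j k̄}) by A_{jk} = (1/4)(H_{x^j x^k} + H_{y^j y^k}) + (√−1/4)(H_{x^j y^k} − H_{x^k y^j}). Then det H ≤ 8ⁿ · |det A|². -/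
/-!
Let `J` be the matrix of multiplication by `i` on `ℂⁿ = ℝⁿ ⊕ ℝⁿ`. Since `J` is orthogonal,
`Jᵀ H J` is positive semidefinite with the same determinant as `H`, and `H + Jᵀ H J` is the
realification `[[X, Y], [-Y, X]]` of the complex matrix `X + iY = 4A`, whose determinant is
`|det (4A)|² = 16ⁿ |det A|²`. The determinantal AM-GM inequality
`det (P + Q) ≥ 2^(2n) √(det P · det Q)` for positive semidefinite `P, Q`, which reduces to
`1 + λ ≥ 2√λ` on the eigenvalues of `P^(-1/2) Q P^(-1/2)`, then gives `det H ≤ 4ⁿ |det A|²`.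
-/

open Matrix Complex

namespace Matrix

variable {m : Type*} [Fintype m] [DecidableEq m]

theorem IsHermitian.det_cfc {𝕜 : Type*} [RCLike 𝕜] {Z : Matrix m m 𝕜} (hZ : Z.IsHermitian)
    (f : ℝ → ℝ) : (cfc f Z).det = ∏ i, (f (hZ.eigenvalues i) : 𝕜) := by
  rw [hZ.cfc_eq, IsHermitian.cfc, Unitary.conjStarAlgAut_apply, det_mul_right_comm]
  simp

theorem PosSemidef.two_pow_card_mul_sqrt_det_le_det_one_add {Z : Matrix m m ℝ}
    (hZ : Z.PosSemidef) : 2 ^ Fintype.card m * √Z.det ≤ (1 + Z).det := by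
  have hZsa : IsSelfAdjoint Z := hZ.isHermitian
  have h1Z : 1 + Z = cfc (fun x : ℝ => 1 + x) Z := by
    rw [cfc_const_add 1 (fun x : ℝ => x) Z, cfc_id' ℝ Z, algebraMap_eq_diagonal]
    simp
  rw [h1Z, hZ.isHermitian.det_cfc, hZ.isHermitian.det_eq_prod_eigenvalues]
  simp only [RCLike.ofReal_real_eq_id, id_eq]
  rw [Real.sqrt_prod _ fun i _ => hZ.eigenvalues_nonneg i, ← Finset.card_univ, ← Finset.prod_const,
    ← Finset.prod_mul_distrib]
  refine Finset.prod_le_prod (fun i _ => by positivity) fun i _ => ?_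
  have hsq := Real.sq_sqrt (hZ.eigenvalues_nonneg i)
  nlinarith [sq_nonneg (√(hZ.isHermitian.eigenvalues i) - 1)]

theorem PosSemidef.two_pow_card_mul_sqrt_det_mul_det_le_det_add {X Y : Matrix m m ℝ}
    (hX : X.PosSemidef) (hY : Y.PosSemidef) :
    2 ^ Fintype.card m * √(X.det * Y.det) ≤ (X + Y).det := by
  rcases eq_or_ne X.det 0 with hX0 | hX0
  · simpa [hX0] using (hX.add hY).det_nonneg
  obtain ⟨S, hS, hSS⟩ : ∃ S : Matrix m m ℝ, S.PosSemidef ∧ S * S = X :=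
    open scoped MatrixOrder in
    ⟨CFC.sqrt X, (CFC.sqrt_nonneg X).posSemidef, CFC.sqrt_mul_sqrt_self X hX.nonneg⟩
  have hSdet : IsUnit S.det := by
    refine isUnit_iff_ne_zero.mpr fun h => hX0 ?_
    rw [← hSS, det_mul, h, zero_mul]
  set Z := S⁻¹ * Y * S⁻¹
  have hZ : Z.PosSemidef := by
    have := hY.conjTranspose_mul_mul_same S⁻¹
    rwa [hS.isHermitian.inv] at this
  have hSZS : S * Z * S = Y := by
    simp only [Z, ← mul_assoc, mul_nonsing_inv _ hSdet, one_mul]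
    rw [mul_assoc, nonsing_inv_mul _ hSdet, mul_one]
  have hXY : X + Y = S * (1 + Z) * S := by
    rw [mul_add, mul_one, add_mul, hSS, hSZS]
  calc 2 ^ Fintype.card m * √(X.det * Y.det)
      = S.det ^ 2 * (2 ^ Fintype.card m * √Z.det) := by
        rw [← hSS, ← hSZS, det_mul, det_mul, det_mul,
          show S.det * S.det * (S.det * Z.det * S.det) = (S.det ^ 2) ^ 2 * Z.det by ring,
          Real.sqrt_mul (by positivity), Real.sqrt_sq (by positivity)]
        ring
    _ ≤ S.det ^ 2 * (1 + Z).det := by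
        gcongr
        exact hZ.two_pow_card_mul_sqrt_det_le_det_one_add
    _ = (X + Y).det := by rw [hXY, det_mul, det_mul]; ring

theorem det_fromBlocks_neg_eq_norm_det_sq {ι : Type*} [Fintype ι] [DecidableEq ι]
    (X Y : Matrix ι ι ℝ) :
    (fromBlocks X Y (-Y) X).det = ‖(X.map ofReal + I • Y.map ofReal).det‖ ^ 2 := by
  set M := X.map ofReal + I • Y.map ofReal
  have hM : X.map ofReal - I • Y.map ofReal = M.map (starRingEnd ℂ) := by
    ext j k; simp [M, sub_eq_add_neg]
  have hK : (fromBlocks X Y (-Y) X).map ofReal =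
      fromBlocks 1 (-(I • 1)) 0 1 * fromBlocks (M.map (starRingEnd ℂ)) 0 (-Y.map ofReal) M *
        fromBlocks 1 (I • 1) 0 1 := by
    rw [← hM, fromBlocks_map, fromBlocks_multiply, fromBlocks_multiply]
    congr 1 <;> ext j k <;> simp [M, ← mul_assoc]
  have hdet : ((fromBlocks X Y (-Y) X).det : ℂ) = starRingEnd ℂ M.det * M.det := by
    rw [show ((fromBlocks X Y (-Y) X).det : ℂ) = ((fromBlocks X Y (-Y) X).map ofReal).det from
      ofRealHom.map_det _, hK, det_mul, det_mul, det_fromBlocks_zero₁₂,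
      show (M.map (starRingEnd ℂ)).det = starRingEnd ℂ M.det from ((starRingEnd ℂ).map_det M).symm]
    simp
  rw [mul_comm, mul_conj, normSq_eq_norm_sq] at hdet
  exact_mod_cast hdet

end Matrix

section ComplexStructure

variable (ι R : Type*) [DecidableEq ι] [CommRing R]

def complexStructure : Matrix (ι ⊕ ι) (ι ⊕ ι) R := fromBlocks 0 (-1) 1 0

variable {ι R} [Fintype ι]

theorem complexStructure_transpose_mul_self :
    (complexStructure ι R)ᵀ * complexStructure ι R = 1 := by
  simp [complexStructure, fromBlocks_transpose, fromBlocks_multiply]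

theorem det_transpose_complexStructure_mul_mul (H : Matrix (ι ⊕ ι) (ι ⊕ ι) R) :
    ((complexStructure ι R)ᵀ * H * complexStructure ι R).det = H.det := by
  rw [det_mul, det_mul, mul_right_comm, ← det_mul, complexStructure_transpose_mul_self, det_one,
    one_mul]

theorem add_transpose_complexStructure_mul_mul (H : Matrix (ι ⊕ ι) (ι ⊕ ι) R) :
    H + (complexStructure ι R)ᵀ * H * complexStructure ι R =
      fromBlocks (H.toBlocks₁₁ + H.toBlocks₂₂) (H.toBlocks₁₂ - H.toBlocks₂₁)
        (-(H.toBlocks₁₂ - H.toBlocks₂₁)) (H.toBlocks₁₁ + H.toBlocks₂₂) := by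
  conv_lhs => rw [← fromBlocks_toBlocks H]
  simp [complexStructure, fromBlocks_transpose, fromBlocks_multiply, fromBlocks_add,
    ← sub_eq_add_neg, add_comm]

end ComplexStructure

theorem det_real_hessian_le_pow_mul_abs_det_complex_hessian_sq_general
    (n : ℕ)
    (H : Matrix (Fin n ⊕ Fin n) (Fin n ⊕ Fin n) ℝ)
    (hHpsd : H.PosSemidef)
    (A : Matrix (Fin n) (Fin n) ℂ)
    (hA : ∀ j k : Fin n, A j k =
      (((H (Sum.inl j) (Sum.inl k) + H (Sum.inr j) (Sum.inr k)) / 4 : ℝ) : ℂ)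
        + Complex.I *
          (((H (Sum.inl j) (Sum.inr k) - H (Sum.inl k) (Sum.inr j)) / 4 : ℝ) : ℂ)) :
    H.det ≤ 8 ^ n * ‖A.det‖ ^ 2 := by
  set J := complexStructure (Fin n) ℝ
  have hJHJ : (Jᵀ * H * J).PosSemidef := by
    simpa [conjTranspose_eq_transpose_of_trivial] using hHpsd.conjTranspose_mul_mul_same J
  have h4A : (H.toBlocks₁₁ + H.toBlocks₂₂).map ofReal +
      I • (H.toBlocks₁₂ - H.toBlocks₂₁).map ofReal = (4 : ℂ) • A := by
    ext j k
    have hsymm : H (Sum.inr j) (Sum.inl k) = H (Sum.inl k) (Sum.inr j) := by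
      simpa using hHpsd.isHermitian.apply (Sum.inl k) (Sum.inr j)
    simp [hA, toBlocks₁₁, toBlocks₁₂, toBlocks₂₁, toBlocks₂₂, hsymm]
    ring
  have key := hHpsd.two_pow_card_mul_sqrt_det_mul_det_le_det_add hJHJ
  rw [det_transpose_complexStructure_mul_mul, Real.sqrt_mul_self hHpsd.det_nonneg,
    add_transpose_complexStructure_mul_mul, det_fromBlocks_neg_eq_norm_det_sq, h4A, det_smul,
    norm_mul, norm_pow, Complex.norm_ofNat, Fintype.card_sum, Fintype.card_fin, ← two_mul,
    pow_mul] at key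
  have key' : (4 : ℝ) ^ n * H.det ≤ 4 ^ n * (4 ^ n * ‖A.det‖ ^ 2) := by
    convert key using 1
    · norm_num
    · ring
  calc H.det ≤ 4 ^ n * ‖A.det‖ ^ 2 := le_of_mul_le_mul_left key' (by positivity)
    _ ≤ 8 ^ n * ‖A.det‖ ^ 2 := by gcongr; norm_num

/-- Let `H` be a real symmetric positive semidefinite `(2n)×(2n)` matrix,
whose rows and columns are indexed by the real coordinates `x¹,…,xⁿ,y¹,…,yⁿ` of `ℂⁿ`
(`Sum.inl`-indices correspond to `x`-coordinates, `Sum.inr`-indices to `y`-coordinates).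
Let `A` be the complex `n×n` matrix with entries
`A j k = (1/4)(H_{xʲxᵏ} + H_{yʲyᵏ}) + (√-1/4)(H_{xʲyᵏ} - H_{xᵏyʲ})`.
Then `det H ≤ 8ⁿ · |det A|²`. -/
theorem det_real_hessian_le_pow_mul_abs_det_complex_hessian_sq
    (n : ℕ) (hn : 1 ≤ n)
    (H : Matrix (Fin n ⊕ Fin n) (Fin n ⊕ Fin n) ℝ)
    (hHsymm : H.IsSymm) (hHpsd : H.PosSemidef)
    (A : Matrix (Fin n) (Fin n) ℂ)
    (hA : ∀ j k : Fin n, A j k =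
      (((H (Sum.inl j) (Sum.inl k) + H (Sum.inr j) (Sum.inr k)) / 4 : ℝ) : ℂ)
        + Complex.I *
          (((H (Sum.inl j) (Sum.inr k) - H (Sum.inl k) (Sum.inr j)) / 4 : ℝ) : ℂ)) :
    H.det ≤ 8 ^ n * ‖A.det‖ ^ 2 :=
  det_real_hessian_le_pow_mul_abs_det_complex_hessian_sq_general n H hHpsd A hA
end

section
/- Let n ≥ 1 and let A and B be n×n complex Hermitian positive semidefinite matrices. Then the trace of A·B is a nonnegative real number, and det A · det B ≤ (trace(A·B)/n)ⁿ (all determinants and the trace here being real). -/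
open scoped ComplexOrder

/-! With `S = √A`, the matrix `S * B * S` is positive semidefinite, has the trace of `A * B` and
the determinant `det A * det B`; AM-GM applied to its eigenvalues gives the inequality. -/

open Finset in
theorem Real.prod_le_sum_div_card_pow {ι : Type*} (s : Finset ι) (z : ι → ℝ)
    (hz : ∀ i ∈ s, 0 ≤ z i) : ∏ i ∈ s, z i ≤ ((∑ i ∈ s, z i) / #s) ^ #s := by
  rcases s.eq_empty_or_nonempty with rfl | hs
  · simp
  have hcard : (0 : ℝ) < #s := by exact_mod_cast hs.card_pos
  have hprod : 0 ≤ ∏ i ∈ s, z i := prod_nonneg hz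
  have amgm := Real.geom_mean_le_arith_mean s (fun _ ↦ 1) z (fun _ _ ↦ zero_le_one)
    (by simpa using hcard) hz
  simp only [Real.rpow_one, one_mul, sum_const, nsmul_eq_mul, mul_one] at amgm
  calc ∏ i ∈ s, z i = ((∏ i ∈ s, z i) ^ (#s : ℝ)⁻¹) ^ #s := by
        rw [← Real.rpow_natCast, ← Real.rpow_mul hprod, inv_mul_cancel₀ hcard.ne', Real.rpow_one]
    _ ≤ ((∑ i ∈ s, z i) / #s) ^ #s := by gcongr

namespace Matrix

variable {n 𝕜 : Type*} [Fintype n] [DecidableEq n] [RCLike 𝕜]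

theorem PosSemidef.det_le_trace_div_card_pow {M : Matrix n n 𝕜} (hM : M.PosSemidef) :
    M.det ≤ (M.trace / Fintype.card n) ^ Fintype.card n := by
  rw [hM.isHermitian.det_eq_prod_eigenvalues, hM.isHermitian.trace_eq_sum_eigenvalues]
  have := Real.prod_le_sum_div_card_pow Finset.univ _ fun i _ ↦ hM.eigenvalues_nonneg i
  rw [Finset.card_univ] at this
  exact_mod_cast (RCLike.ofReal_le_ofReal (K := 𝕜)).mpr this

open scoped MatrixOrder in
theorem PosSemidef.exists_posSemidef_trace_eq_det_eq {A B : Matrix n n 𝕜} (hA : A.PosSemidef)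
    (hB : B.PosSemidef) :
    ∃ M : Matrix n n 𝕜, M.PosSemidef ∧ M.trace = (A * B).trace ∧ M.det = A.det * B.det := by
  set S := CFC.sqrt A
  have hS : S.IsHermitian := (nonneg_iff_posSemidef.mp (CFC.sqrt_nonneg A)).isHermitian
  have hSS : S * S = A := CFC.sqrt_mul_sqrt_self A hA.nonneg
  refine ⟨S * B * S, ?_, ?_, ?_⟩
  · simpa only [hS.eq] using hB.conjTranspose_mul_mul_same S
  · rw [trace_mul_cycle, hSS]
  · rw [det_mul, det_mul, ← hSS, det_mul]
    ring

theorem PosSemidef.trace_mul_nonneg {A B : Matrix n n 𝕜} (hA : A.PosSemidef) (hB : B.PosSemidef) :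
    0 ≤ (A * B).trace := by
  obtain ⟨M, hM, htr, -⟩ := hA.exists_posSemidef_trace_eq_det_eq hB
  exact htr ▸ hM.trace_nonneg

theorem PosSemidef.det_mul_det_le_trace_mul_div_card_pow {A B : Matrix n n 𝕜}
    (hA : A.PosSemidef) (hB : B.PosSemidef) :
    A.det * B.det ≤ ((A * B).trace / Fintype.card n) ^ Fintype.card n := by
  obtain ⟨M, hM, htr, hdet⟩ := hA.exists_posSemidef_trace_eq_det_eq hB
  exact htr ▸ hdet ▸ hM.det_le_trace_div_card_pow

end Matrix

theorem det_mul_det_le_trace_div_card_pow_general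
    (n : ℕ) (A B : Matrix (Fin n) (Fin n) ℂ) (hApsd : A.PosSemidef) (hBpsd : B.PosSemidef) :
    ((A * B).trace.im = 0 ∧ 0 ≤ (A * B).trace.re) ∧
      A.det.im = 0 ∧ B.det.im = 0 ∧
      A.det.re * B.det.re ≤ ((A * B).trace.re / n) ^ n := by
  have hle := hApsd.det_mul_det_le_trace_mul_div_card_pow hBpsd
  have htr := hApsd.trace_mul_nonneg hBpsd
  have hdetA := hApsd.det_nonneg
  have hdetB := hBpsd.det_nonneg
  generalize (A * B).trace = t at *
  generalize A.det = a at *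
  generalize B.det = b at *
  obtain ⟨t, ht, rfl⟩ := RCLike.nonneg_iff_exists_ofReal.mp htr
  obtain ⟨a, -, rfl⟩ := RCLike.nonneg_iff_exists_ofReal.mp hdetA
  obtain ⟨b, -, rfl⟩ := RCLike.nonneg_iff_exists_ofReal.mp hdetB
  simp only [Complex.coe_algebraMap, Fintype.card_fin] at hle
  simp only [Complex.coe_algebraMap, Complex.ofReal_im, Complex.ofReal_re, true_and]
  exact ⟨ht, by exact_mod_cast hle⟩

/-- Let `A` and `B` be `n×n` complex Hermitian positive semidefinite
matrices (`n ≥ 1`). Then the trace of `A·B` is a nonnegative real number, and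
`det A · det B ≤ (trace(A·B)/n)ⁿ` (all determinants and the trace being real). -/
theorem det_mul_det_le_trace_div_card_pow
    (n : ℕ) (hn : 1 ≤ n) (A B : Matrix (Fin n) (Fin n) ℂ)
    (hA : A.IsHermitian) (hApsd : A.PosSemidef)
    (hB : B.IsHermitian) (hBpsd : B.PosSemidef) :
    ((A * B).trace.im = 0 ∧ 0 ≤ (A * B).trace.re) ∧
      A.det.im = 0 ∧ B.det.im = 0 ∧
      A.det.re * B.det.re ≤ ((A * B).trace.re / n) ^ n :=
  det_mul_det_le_trace_div_card_pow_general n A B hApsd hBpsd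
end

section
/- Moser-iteration sup bound: Let n ≥ 2 and κ = n/(n−1). There is a constant C > 0 depending only on n such that the following holds. Let (X, μ) be a measure space with μ(X) < ∞, let f : X → [0,∞) be measurable, let K ≥ 1 and let p ≥ 2 be a real number. Suppose that for every exponent q of the form q = p·κ^i with i ∈ ℕ, the L^q(μ) norm of f is finite and ‖f‖_{L^{qκ}(μ)} ≤ (Kq)^{1/q} · ‖f‖_{L^q(μ)}. Then ess sup_X f ≤ C · K^{n/p} · ‖f‖_{L^p(μ)}. -/
/-! Iterating `‖f‖_{κq} ≤ (Kq)^{1/q} ‖f‖_q` along the exponents `qᵢ = p κⁱ` bounds every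
`‖f‖_{q_m}` by `∏_{i<m} (K qᵢ)^{1/qᵢ} ‖f‖_p`. The logarithm of the product is
`∑ (log K + log qᵢ) / qᵢ`: since `∑ 1/qᵢ ≤ 1/(p(1 - κ⁻¹)) = n/p` the first part contributes
`K^{n/p}`, and `log q ≤ 2√q` turns the second into a geometric series in `κ^{-1/2}` whose sum is
bounded independently of `p ≥ 2`. A bound on `‖f‖_q` uniform along `q → ∞` bounds `ess sup f`. -/

open MeasureTheory Filter Finset Real
open scoped ENNReal

theorem essSup_le_of_lintegral_rpow_le {X ι : Type*} [MeasurableSpace X] {μ : Measure X}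
    {g : X → ℝ≥0∞} (hg : AEMeasurable g μ) {l : Filter ι} [l.NeBot] {q : ι → ℝ}
    (hq : Tendsto q l atTop) {B : ℝ≥0∞}
    (hB : ∀ᶠ i in l, (∫⁻ x, g x ^ q i ∂μ) ^ (1 / q i) ≤ B) :
    essSup g μ ≤ B := by
  refine le_of_forall_gt_imp_ge_of_dense fun c hBc => ?_
  rcases eq_or_ne c ⊤ with rfl | hc_top
  · exact le_top
  have hc0 : 0 < c := bot_le.trans_lt hBc
  have hBc1 : B / c < 1 := ENNReal.div_lt_of_lt_mul (by rwa [one_mul])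
  suffices hnull : μ {x | c ≤ g x} = 0 by
    refine essSup_le_of_ae_le c (measure_mono_null (fun x hx => ?_) hnull)
    exact (not_le.1 (by simpa using hx)).le
  -- Markov's inequality for `g ^ q` gives `μ {c ≤ g} ≤ (B / c) ^ q`, which tends to `0`.
  refine le_antisymm (ge_of_tendsto ((ENNReal.tendsto_rpow_atTop_of_base_lt_one hBc1).comp hq) ?_)
    bot_le
  filter_upwards [hB, hq.eventually_gt_atTop 0] with i hBi hqi
  change _ ≤ (B / c) ^ q i
  rw [one_div, ENNReal.rpow_inv_le_iff hqi] at hBi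
  calc μ {x | c ≤ g x} ≤ μ {x | c ^ q i ≤ g x ^ q i} :=
        measure_mono fun x hx => ENNReal.rpow_le_rpow hx hqi.le
    _ ≤ (∫⁻ x, g x ^ q i ∂μ) / c ^ q i :=
        meas_ge_le_lintegral_div (hg.pow_const (q i))
          (ENNReal.rpow_pos_of_nonneg hc0 hqi.le).ne' (ENNReal.rpow_ne_top_of_nonneg hqi.le hc_top)
    _ ≤ B ^ q i / c ^ q i := by gcongr
    _ = (B / c) ^ q i := (ENNReal.div_rpow_of_nonneg _ _ hqi.le).symm

theorem le_prod_mul_of_le_mul_succ {M : Type*} [CommMonoid M] [Preorder M] [MulLeftMono M]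
    {N a : ℕ → M} (h : ∀ i, N (i + 1) ≤ a i * N i) (m : ℕ) :
    N m ≤ (∏ i ∈ range m, a i) * N 0 := by
  induction m with
  | zero => simp
  | succ m ih =>
    calc N (m + 1) ≤ a m * N m := h m
      _ ≤ a m * ((∏ i ∈ range m, a i) * N 0) := mul_le_mul_right ih _
      _ = (∏ i ∈ range (m + 1), a i) * N 0 := by rw [prod_range_succ, mul_comm _ (a m), mul_assoc]

theorem log_div_le_two_div_sqrt {x : ℝ} (hx : 0 < x) : log x / x ≤ 2 / √x := by
  have hlog : log x ≤ 2 * √x := by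
    have := log_le_rpow_div hx.le one_half_pos
    rwa [← sqrt_eq_rpow, div_div_eq_mul_div, div_one, mul_comm] at this
  calc log x / x ≤ 2 * √x / x := by gcongr
    _ = 2 / √x := by
      rw [div_eq_div_iff hx.ne' (sqrt_pos.2 hx).ne', mul_assoc, mul_self_sqrt hx.le]

theorem sum_range_mul_pow_le {a r : ℝ} (ha : 0 ≤ a) (hr0 : 0 ≤ r) (hr1 : r < 1) (m : ℕ) :
    ∑ i ∈ range m, a * r ^ i ≤ a / (1 - r) := by
  rw [← mul_sum, div_eq_mul_one_div]
  gcongr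
  simpa using geom_sum_Ico_le_of_lt_one (m := 0) (n := m) hr0 hr1

theorem sum_range_log_mul_div_le {κ K p : ℝ} (hκ : 1 < κ) (hK : 1 ≤ K) (hp : 2 ≤ p) (m : ℕ) :
    ∑ i ∈ range m, log (K * (p * κ ^ i)) / (p * κ ^ i) ≤
      log K * (p⁻¹ / (1 - κ⁻¹)) + √2 / (1 - (√κ)⁻¹) := by
  have hq : ∀ i : ℕ, 0 < p * κ ^ i := fun i => by positivity
  have hsqrtκ : 1 < √κ := by simpa using sqrt_lt_sqrt zero_le_one hκ
  have hinv : ∑ i ∈ range m, (p * κ ^ i)⁻¹ ≤ p⁻¹ / (1 - κ⁻¹) := by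
    simp_rw [mul_inv, ← inv_pow]
    exact sum_range_mul_pow_le (by positivity) (by positivity) (inv_lt_one_of_one_lt₀ hκ) m
  have hlog : ∑ i ∈ range m, log (p * κ ^ i) / (p * κ ^ i) ≤ √2 / (1 - (√κ)⁻¹) := by
    calc ∑ i ∈ range m, log (p * κ ^ i) / (p * κ ^ i)
        ≤ ∑ i ∈ range m, 2 / √p * (√κ)⁻¹ ^ i := by
          refine sum_le_sum fun i _ => (log_div_le_two_div_sqrt (hq i)).trans_eq ?_
          have hpow : √(κ ^ i) = √κ ^ i := by
            rw [sqrt_eq_iff_eq_sq (by positivity) (by positivity), ← pow_mul, mul_comm, pow_mul,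
              sq_sqrt (by positivity)]
          rw [sqrt_mul (by positivity), hpow, inv_pow, div_mul_eq_div_div, div_eq_mul_inv]
      _ ≤ 2 / √p / (1 - (√κ)⁻¹) :=
          sum_range_mul_pow_le (by positivity) (by positivity) (inv_lt_one_of_one_lt₀ hsqrtκ) m
      _ ≤ √2 / (1 - (√κ)⁻¹) := by
          have : 0 < 1 - (√κ)⁻¹ := sub_pos.2 (inv_lt_one_of_one_lt₀ hsqrtκ)
          gcongr
          calc 2 / √p ≤ 2 / √2 := by gcongr
            _ = √2 := div_sqrt
  calc ∑ i ∈ range m, log (K * (p * κ ^ i)) / (p * κ ^ i)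
      = log K * ∑ i ∈ range m, (p * κ ^ i)⁻¹ +
          ∑ i ∈ range m, log (p * κ ^ i) / (p * κ ^ i) := by
        rw [mul_sum, ← sum_add_distrib]
        refine sum_congr rfl fun i _ => ?_
        rw [log_mul (by positivity) (hq i).ne', add_div, div_eq_mul_inv]
    _ ≤ log K * (p⁻¹ / (1 - κ⁻¹)) + √2 / (1 - (√κ)⁻¹) := by
        gcongr
        exact log_nonneg hK

theorem prod_range_rpow_inv_le {κ K p : ℝ} (hκ : 1 < κ) (hK : 1 ≤ K) (hp : 2 ≤ p) (m : ℕ) :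
    ∏ i ∈ range m, (K * (p * κ ^ i)) ^ (1 / (p * κ ^ i)) ≤
      exp (√2 / (1 - (√κ)⁻¹)) * K ^ (p⁻¹ / (1 - κ⁻¹)) := by
  have hK0 : 0 < K := by linarith
  calc ∏ i ∈ range m, (K * (p * κ ^ i)) ^ (1 / (p * κ ^ i))
      = exp (∑ i ∈ range m, log (K * (p * κ ^ i)) / (p * κ ^ i)) := by
        rw [exp_sum]
        refine prod_congr rfl fun i _ => ?_
        rw [rpow_def_of_pos (by positivity), mul_one_div]
    _ ≤ exp (log K * (p⁻¹ / (1 - κ⁻¹)) + √2 / (1 - (√κ)⁻¹)) :=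
        exp_le_exp.2 (sum_range_log_mul_div_le hκ hK hp m)
    _ = exp (√2 / (1 - (√κ)⁻¹)) * K ^ (p⁻¹ / (1 - κ⁻¹)) := by
        rw [exp_add, rpow_def_of_pos hK0, mul_comm]

/-- Moser-iteration sup bound. Let `n ≥ 2` and `κ = n/(n−1)`. There is a
constant `C > 0` depending only on `n` such that: for every finite measure space `(X, μ)`,
every measurable `f : X → [0,∞)`, every `K ≥ 1` and every real `p ≥ 2`, if for every
exponent `q = p·κⁱ` (`i ∈ ℕ`) the `L^q(μ)` norm of `f` is finite and
`‖f‖_{L^{qκ}(μ)} ≤ (Kq)^{1/q} ‖f‖_{L^q(μ)}`, then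
`ess sup_X f ≤ C · K^{n/p} · ‖f‖_{L^p(μ)}`. -/
theorem moser_iteration_sup_bound (n : ℕ) (hn : 2 ≤ n) :
    ∃ C : ℝ, 0 < C ∧
      ∀ (X : Type) (_ : MeasurableSpace X) (μ : Measure X), μ Set.univ < ⊤ →
      ∀ (f : X → ℝ), Measurable f → (∀ x, 0 ≤ f x) →
      ∀ (K p : ℝ), 1 ≤ K → 2 ≤ p →
      (∀ i : ℕ,
        (∫⁻ x, ENNReal.ofReal (f x ^ (p * ((n : ℝ)/((n : ℝ) - 1)) ^ i)) ∂μ) ≠ ⊤ ∧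
        (∫⁻ x, ENNReal.ofReal
              (f x ^ (p * ((n : ℝ)/((n : ℝ) - 1)) ^ i * ((n : ℝ)/((n : ℝ) - 1)))) ∂μ) ^
            (1 / (p * ((n : ℝ)/((n : ℝ) - 1)) ^ i * ((n : ℝ)/((n : ℝ) - 1)))) ≤
          ENNReal.ofReal ((K * (p * ((n : ℝ)/((n : ℝ) - 1)) ^ i)) ^
              (1 / (p * ((n : ℝ)/((n : ℝ) - 1)) ^ i))) *
            (∫⁻ x, ENNReal.ofReal (f x ^ (p * ((n : ℝ)/((n : ℝ) - 1)) ^ i)) ∂μ) ^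
              (1 / (p * ((n : ℝ)/((n : ℝ) - 1)) ^ i))) →
      essSup (fun x => ENNReal.ofReal (f x)) μ ≤
        ENNReal.ofReal (C * K ^ ((n : ℝ) / p)) *
          (∫⁻ x, ENNReal.ofReal (f x ^ p) ∂μ) ^ (1 / p) := by
  set κ : ℝ := (n : ℝ) / ((n : ℝ) - 1)
  have hn_real : (2 : ℝ) ≤ n := by exact_mod_cast hn
  have hκ : 1 < κ := (one_lt_div (by linarith)).2 (by linarith)
  refine ⟨exp (√2 / (1 - (√κ)⁻¹)), exp_pos _, ?_⟩
  intro X _ μ _ f hf hf0 K p hK hp h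
  have hp0 : 0 < p := by linarith
  have hexponent : p⁻¹ / (1 - κ⁻¹) = n / p := by
    have : (n : ℝ) - 1 ≠ 0 := by linarith
    simp only [κ]
    field_simp
    ring
  set N : ℕ → ℝ≥0∞ := fun i => (∫⁻ x, ENNReal.ofReal (f x ^ (p * κ ^ i)) ∂μ) ^ (1 / (p * κ ^ i))
  have hstep (i : ℕ) :
      N (i + 1) ≤ ENNReal.ofReal ((K * (p * κ ^ i)) ^ (1 / (p * κ ^ i))) * N i := by
    simpa only [N, pow_succ, mul_assoc] using (h i).2
  have hN (m : ℕ) : N m ≤ ENNReal.ofReal (exp (√2 / (1 - (√κ)⁻¹)) * K ^ ((n : ℝ) / p)) * N 0 := by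
    refine (le_prod_mul_of_le_mul_succ hstep m).trans (mul_le_mul_left ?_ _)
    rw [← ENNReal.ofReal_prod_of_nonneg fun i _ => by positivity, ← hexponent]
    exact ENNReal.ofReal_le_ofReal (prod_range_rpow_inv_le hκ hK hp m)
  refine essSup_le_of_lintegral_rpow_le hf.ennreal_ofReal.aemeasurable
    ((tendsto_pow_atTop_atTop_of_one_lt hκ).const_mul_atTop hp0) (Eventually.of_forall fun m => ?_)
  simp_rw [ENNReal.ofReal_rpow_of_nonneg (hf0 _) (by positivity : 0 ≤ p * κ ^ m)]
  simpa [N] using hN m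
end
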